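/- Suppose that in the analytic eigenvalue expansions λ_l(t) = γ_l t² + μ_l t³ + … of A(t) one has μ_j ≠ 0 for some j (i.e., N₀ ≠ 0). Let s ≥ 3. Then there does not exist a positive function C(τ) with lim_{τ→∞} C(τ)/|τ| = 0 such that ‖e^{-iτε^{-2}A(t)}P − e^{-iτε^{-2}t²SP}P‖ · ε^{s}(t²+ε²)^{-s/2} ≤ C(τ)ε holds for all τ ∈ ℝ and all sufficiently small |t| and ε > 0. -/

import Mathlib

/-!
Birman–Suslina abstract operator-theoretic scheme.

`BSScheme` encodes: complex separable Hilbert spaces `H`, `Hs`; a densely defined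
closed operator `X₀ : H → Hs`; a bounded operator `X₁`; the family
`X(t) = X₀ + t X₁` and the selfadjoint nonnegative operator family
`A(t) = X(t)* X(t)` (encoded through its quadratic form); the kernel
`𝔑 = Ker A(0) = Ker X₀` of finite dimension `n` with `n ≤ dim Ker X₀*`;
the orthogonal projections `P`, `P*` onto `𝔑` and `𝔑* = Ker X₀* = (Ran X₀)ᗮ`;
the spectral gap data `0 < 8δ < d⁰` (the point `0` is isolated in the spectrum
of `A₀`); the operator `Z` (solving the weak problem `X₀*(X₀ ψ + X₁ ω) = 0`);
and the unitary group `E t τ = e^{-iτ A(t)}` generated by `A(t)`.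
-/

noncomputable section

open ContinuousLinearMap

structure BSScheme where
  H : Type
  Hs : Type
  [instH₁ : NormedAddCommGroup H]
  [instH₂ : InnerProductSpace ℂ H]
  [instH₃ : CompleteSpace H]
  [instHs₁ : NormedAddCommGroup Hs]
  [instHs₂ : InnerProductSpace ℂ Hs]
  [instHs₃ : CompleteSpace Hs]
  /-- densely defined closed operator `X₀` -/
  X₀ : H →ₗ.[ℂ] Hs
  X₀_dense : Dense (X₀.domain : Set H)
  X₀_closed : IsClosed (X₀.graph : Set (H × Hs))
  /-- bounded operator `X₁` -/
  X₁ : H →L[ℂ] Hs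
  n : ℕ
  n_pos : 0 < n
  /-- the kernel `𝔑 = Ker X₀ = Ker A(0)` -/
  ker : Submodule ℂ H
  ker_def : ∀ u : H, u ∈ ker ↔ ∃ hu : u ∈ X₀.domain, X₀ ⟨u, hu⟩ = 0
  ker_findim : FiniteDimensional ℂ ker
  ker_rank : Module.finrank ℂ ker = n
  /-- the kernel `𝔑* = Ker X₀* = (Ran X₀)ᗮ` -/
  kerStar : Submodule ℂ Hs
  kerStar_def : ∀ v : Hs, v ∈ kerStar ↔ ∀ u : X₀.domain, (inner ℂ (X₀ u) v : ℂ) = 0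
  rank_le : (n : Cardinal) ≤ Module.rank ℂ kerStar
  /-- the orthogonal projection onto `𝔑` -/
  P : H →L[ℂ] H
  P_mem : ∀ u, P u ∈ ker
  P_fix : ∀ u ∈ ker, P u = u
  P_sa : IsSelfAdjoint P
  /-- the orthogonal projection onto `𝔑*` -/
  Pstar : Hs →L[ℂ] Hs
  Pstar_mem : ∀ v, Pstar v ∈ kerStar
  Pstar_fix : ∀ v ∈ kerStar, Pstar v = v
  Pstar_sa : IsSelfAdjoint Pstar
  /-- `d⁰` is the distance from the isolated spectral point `0` to the rest of the
  spectrum of `A₀`: the form `‖X₀ u‖²` is `≥ d⁰‖u‖²` on `𝔑ᗮ` -/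
  d0 : ℝ
  δ : ℝ
  δ_pos : 0 < δ
  gap : ∀ u : X₀.domain, (u : H) ∈ kerᗮ → d0 * ‖(u : H)‖ ^ 2 ≤ ‖X₀ u‖ ^ 2
  δ_small : 8 * δ < d0
  /-- the selfadjoint operator family `A(t) = X(t)* X(t)` generated by the closed
  quadratic form `‖X(t)u‖²`, `u ∈ Dom X₀` -/
  A : ℝ → (H →ₗ.[ℂ] H)
  A_dense : ∀ t, Dense ((A t).domain : Set H)
  A_dom : ∀ t, (A t).domain ≤ X₀.domain
  A_form : ∀ (t : ℝ) (u : (A t).domain) (v : X₀.domain),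
    (inner ℂ ((A t) u) (v : H) : ℂ) =
      inner ℂ (X₀ ⟨(u : H), A_dom t u.2⟩ + t • X₁ (u : H)) (X₀ v + t • X₁ (v : H))
  /-- the operator `Z`: `Z u = ψ(Pu)` where `ψ ∈ Dom X₀ ∩ 𝔑ᗮ` is the weak solution
  of `X₀*(X₀ ψ + X₁ ω) = 0`, `ω = Pu` -/
  Z : H →L[ℂ] H
  Z_proj : ∀ u : H, Z (P u) = Z u
  Z_dom : ∀ u : H, Z u ∈ X₀.domain
  Z_perp : ∀ u : H, Z u ∈ kerᗮ
  Z_sol : ∀ (u : H) (v : X₀.domain),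
    (inner ℂ (X₀ ⟨Z u, Z_dom u⟩ + X₁ (P u)) (X₀ v) : ℂ) = 0
  /-- `E t τ = e^{-iτ A(t)}`: the unitary group generated by `A(t)` -/
  E : ℝ → ℝ → (H →L[ℂ] H)
  E_zero : ∀ t, E t 0 = ContinuousLinearMap.id ℂ H
  E_group : ∀ t τ σ, E t (τ + σ) = (E t τ).comp (E t σ)
  E_isometry : ∀ t τ u, ‖E t τ u‖ = ‖u‖
  E_gen : ∀ (t τ : ℝ) (u : (A t).domain),
    HasDerivAt (fun s : ℝ => E t s (u : H))
      (-(Complex.I • (E t τ ((A t) u)))) τ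

attribute [instance] BSScheme.instH₁ BSScheme.instH₂ BSScheme.instH₃
attribute [instance] BSScheme.instHs₁ BSScheme.instHs₂ BSScheme.instHs₃

namespace BSScheme

variable (S : BSScheme)

/-- `t⁰ = δ^{1/2} ‖X₁‖⁻¹` -/
def t0 : ℝ := Real.sqrt S.δ / ‖S.X₁‖

/-- `R P = P* X₁ P` -/
def RP : S.H →L[ℂ] S.Hs := S.Pstar ∘L S.X₁ ∘L S.P

/-- the spectral germ `S = P X₁* P* X₁ |_𝔑`, extended by zero to `H`
(the operator `S P`) -/
def germ : S.H →L[ℂ] S.H :=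
  S.P ∘L (ContinuousLinearMap.adjoint S.X₁) ∘L S.Pstar ∘L S.X₁ ∘L S.P

/-- the operator `N = Z* X₁* R P + (R P)* X₁ Z` -/
def Nop : S.H →L[ℂ] S.H :=
  (ContinuousLinearMap.adjoint (S.X₁ ∘L S.Z)) ∘L S.RP
    + (ContinuousLinearMap.adjoint S.RP) ∘L (S.X₁ ∘L S.Z)

end BSScheme

/-!  Analytic branches of eigenvalues and eigenvectors of `A(t)` near `t = 0`:
for `|t| ≤ t_*` the eigenvalues of `A(t)` in `[0, δ]` are
`λ_l(t) = γ_l t² + μ_l t³ + ν_l t⁴ + …` with analytic orthonormal eigenvectors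
`φ_l(t) = ω_l + O(t)`, where `{ω_l}` is an orthonormal basis of `𝔑`
consisting of eigenvectors of the germ: `S ω_l = γ_l ω_l`. -/
structure SpecData (S : BSScheme) where
  tstar : ℝ
  tstar_pos : 0 < tstar
  lam : Fin S.n → ℝ → ℝ
  φ : Fin S.n → ℝ → S.H
  ω : Fin S.n → S.H
  γ : Fin S.n → ℝ
  μ : Fin S.n → ℝ
  ν : Fin S.n → ℝ
  ω_mem : ∀ l, ω l ∈ S.ker
  ω_orthonormal : Orthonormal ℂ ω
  germ_eig : ∀ l, S.germ (ω l) = (γ l : ℂ) • ω l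
  φ_orthonormal : ∀ t : ℝ, |t| ≤ tstar → Orthonormal ℂ (fun l => φ l t)
  φ_eig : ∀ (l) (t : ℝ), |t| ≤ tstar →
    ∃ hd : φ l t ∈ (S.A t).domain, (S.A t) ⟨φ l t, hd⟩ = (lam l t : ℂ) • φ l t
  lam_nonneg : ∀ l t, |t| ≤ tstar → 0 ≤ lam l t
  lam_le : ∀ l t, |t| ≤ tstar → lam l t ≤ S.δ
  φ_expansion : ∃ c : ℝ, ∀ (l) (t : ℝ), |t| ≤ tstar → ‖φ l t - ω l‖ ≤ c * |t|
  lam_expansion : ∃ c : ℝ, ∀ (l) (t : ℝ), |t| ≤ tstar →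
    |lam l t - (γ l * t ^ 2 + μ l * t ^ 3 + ν l * t ^ 4)| ≤ c * |t| ^ 5

namespace SpecData

variable {S : BSScheme} (SD : SpecData S)

/-- the rank-one projection `( ·, x) x` -/
noncomputable def rkOne (x : S.H) : S.H →L[ℂ] S.H := (innerSL ℂ x).smulRight x

/-- the orthogonal projection onto the eigenspace of the germ `S`
corresponding to the eigenvalue `a` (zero if `a` is not an eigenvalue) -/
noncomputable def eigProj (a : ℝ) : S.H →L[ℂ] S.H :=
  letI := Classical.decEq ℝ
  ∑ l : Fin S.n, if SD.γ l = a then SpecData.rkOne (SD.ω l) else 0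

/-- the operator `N₀ = Σ_l μ_l ( ·, ω_l) ω_l` (the diagonal part of `N`) -/
noncomputable def N0op : S.H →L[ℂ] S.H :=
  ∑ l : Fin S.n, (SD.μ l : ℂ) • SpecData.rkOne (SD.ω l)

end SpecData


/-! Fix `j` with `μ_j ≠ 0`, let `τ → ∞` and take `t = π / (τ μ_j)`, `ε = |t|`. The weight
`εˢ (t² + ε²)^{-s/2}` is then the constant `2^{-s/2}`. On the eigenvector `φ_j(t) = ω_j + O(t)`
the group `e^{-iτε⁻²A(t)}` acts by the phase `τ t⁻² λ_j(t) = τ γ_j + π + O(t)`, while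
`e^{-iτε⁻²t²SP}` acts on `ω_j` by the phase `τ γ_j`: the two phases are almost opposite, so the
operator norm on the left is at least `1`. The right-hand side is `C(τ) ε = (C(τ)/τ) π/|μ_j|`,
which tends to `0`. -/

open Filter Topology Complex Real

theorem NormedSpace.exp_apply_of_eq_smul {E : Type*} [NormedAddCommGroup E] [NormedSpace ℂ E]
    [CompleteSpace E] {T : E →L[ℂ] E} {a : ℂ} {x : E} (hx : T x = a • x) :
    NormedSpace.exp T x = cexp a • x := by
  have hpow : ∀ n : ℕ, (T ^ n) x = a ^ n • x := by
    intro n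
    induction n with
    | zero => simp
    | succ n ih => rw [pow_succ, mul_apply_eq_comp, hx, map_smul, ih, smul_smul, ← pow_succ']
  have hT :=
    (NormedSpace.exp_series_hasSum_exp' (𝕂 := ℂ) T).mapL (ContinuousLinearMap.apply ℂ E x)
  have ha := (NormedSpace.exp_series_hasSum_exp' (𝕂 := ℂ) a).smul_const x
  simp only [ContinuousLinearMap.apply_apply, smul_apply, hpow, smul_smul] at hT
  rw [← Complex.exp_eq_exp_ℂ] at ha
  exact hT.unique ha

theorem eq_cexp_mul_smul_of_hasDerivAt {E : Type*} [NormedAddCommGroup E] [NormedSpace ℂ E]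
    {f : ℝ → E} {c : ℂ} (hf : ∀ σ, HasDerivAt f (c • f σ) σ) (τ : ℝ) :
    f τ = cexp (c * τ) • f 0 := by
  have hg : ∀ σ : ℝ, HasDerivAt (fun s : ℝ => cexp (-c * s) • f s) 0 σ := by
    intro σ
    have hexp : HasDerivAt (fun s : ℝ => cexp (-c * s)) (cexp (-c * σ) * -c) σ := by
      simpa [mul_comm] using (((hasDerivAt_id σ).ofReal_comp).const_mul (-c)).cexp
    refine (hexp.smul (hf σ)).congr_deriv ?_
    rw [smul_smul, ← add_smul]
    ring_nf
    simp
  have hconst := is_const_of_deriv_eq_zero (fun σ => (hg σ).differentiableAt)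
    (fun σ => (hg σ).deriv) τ 0
  simp only [Complex.ofReal_zero, mul_zero, Complex.exp_zero, one_smul] at hconst
  rw [← hconst, smul_smul, ← Complex.exp_add]
  simp

theorem two_sub_le_norm_cexp_sub_cexp {x y : ℝ} (h : |x - y - π| ≤ 1) :
    2 - 2 * |x - y - π| ≤ ‖cexp (-I * x) - cexp (-I * y)‖ := by
  set e := x - y - π
  have hsplit : cexp (-I * x) - cexp (-I * y) = -cexp (-I * y) * (2 + (cexp (-I * e) - 1)) := by
    have : -I * x = -I * y + -(π * I) + -I * e := by simp only [e]; push_cast; ring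
    rw [this, Complex.exp_add, Complex.exp_add, Complex.exp_neg, Complex.exp_pi_mul_I]
    ring
  have hnorm_e : ‖-I * (e : ℂ)‖ = |e| := by simp
  have hsmall : ‖cexp (-I * e) - 1‖ ≤ 2 * |e| := by
    simpa [hnorm_e] using Complex.norm_exp_sub_one_le (x := -I * e) (hnorm_e ▸ h)
  have hunit : ‖cexp (-I * y)‖ = 1 := by simp [Complex.norm_exp]
  rw [hsplit, norm_mul, norm_neg, hunit, one_mul]
  have htri := norm_sub_le (2 + (cexp (-I * e) - 1)) (cexp (-I * e) - 1)
  rw [add_sub_cancel_right, Complex.norm_two] at htri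
  linarith

theorem norm_sub_sub_two_mul_le_opNorm_sub_comp {E : Type*} [NormedAddCommGroup E]
    [NormedSpace ℂ E] {U V P : E →L[ℂ] E} {φ ω : E} {a b : ℂ}
    (hU : ∀ v, ‖U v‖ = ‖v‖) (ha : ‖a‖ = 1) (hUφ : U φ = a • φ) (hVω : V ω = b • ω)
    (hPω : P ω = ω) (hω : ‖ω‖ = 1) :
    ‖a - b‖ - 2 * ‖φ - ω‖ ≤ ‖(U - V) ∘L P‖ := by
  have hsplit : ((U - V) ∘L P) ω = (a - b) • ω + (a • (φ - ω) + U (ω - φ)) := by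
    rw [ContinuousLinearMap.comp_apply, hPω, sub_apply, hVω, map_sub, hUφ]
    module
  have hrest : ‖a • (φ - ω) + U (ω - φ)‖ ≤ 2 * ‖φ - ω‖ := by
    refine (norm_add_le _ _).trans ?_
    rw [norm_smul, ha, hU, norm_sub_rev ω]
    linarith
  have hop : ‖((U - V) ∘L P) ω‖ ≤ ‖(U - V) ∘L P‖ := by
    simpa [hω] using ((U - V) ∘L P).le_opNorm ω
  have htri := norm_sub_le (((U - V) ∘L P) ω) (a • (φ - ω) + U (ω - φ))
  rw [hsplit, add_sub_cancel_right, norm_smul, hω, mul_one] at htri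
  rw [hsplit] at hop
  linarith

theorem abs_rpow_div_sq_add_sq_rpow_half {t : ℝ} (ht : t ≠ 0) (s : ℝ) :
    |t| ^ s / (t ^ 2 + |t| ^ 2) ^ (s / 2) = (2 ^ (s / 2))⁻¹ := by
  have hpos : 0 < |t| := abs_pos.2 ht
  rw [← sq_abs t, ← two_mul, Real.mul_rpow zero_le_two (sq_nonneg _), ← Real.rpow_natCast _ 2,
    ← Real.rpow_mul hpos.le, Nat.cast_ofNat, mul_div_cancel₀ s two_ne_zero,
    div_mul_cancel_right₀ (Real.rpow_pos_of_pos hpos s).ne']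

theorem tendsto_div_mul_const_atTop_nhdsNE {a b : ℝ} (ha : a ≠ 0) (hb : b ≠ 0) :
    Tendsto (fun τ => a / (τ * b)) atTop (𝓝[≠] 0) := by
  refine tendsto_nhdsWithin_iff.2 ⟨?_, ?_⟩
  · have h := tendsto_inv_atTop_zero.const_mul (a / b)
    rw [mul_zero] at h
    refine h.congr fun τ => ?_
    field_simp
  · filter_upwards [eventually_gt_atTop 0] with τ hτ
    exact div_ne_zero ha (mul_ne_zero hτ.ne' hb)

theorem BSScheme.E_apply_of_eq_smul (S : BSScheme) {t lam : ℝ} {φ : S.H}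
    (hd : φ ∈ (S.A t).domain) (heig : S.A t ⟨φ, hd⟩ = (lam : ℂ) • φ) (τ : ℝ) :
    S.E t τ φ = cexp (-I * (lam * τ : ℝ)) • φ := by
  have hderiv : ∀ σ : ℝ, HasDerivAt (fun s => S.E t s φ) ((-I * lam) • S.E t σ φ) σ := by
    intro σ
    have h := S.E_gen t σ ⟨φ, hd⟩
    rwa [heig, map_smul, smul_smul, ← neg_smul, ← neg_mul] at h
  rw [eq_cexp_mul_smul_of_hasDerivAt hderiv τ, S.E_zero, ContinuousLinearMap.id_apply]
  push_cast
  ring_nf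

namespace SpecData

variable {S : BSScheme} (SD : SpecData S)

theorem tendsto_φ (l : Fin S.n) : Tendsto (SD.φ l) (𝓝 0) (𝓝 (SD.ω l)) := by
  obtain ⟨c, hc⟩ := SD.φ_expansion
  rw [tendsto_iff_norm_sub_tendsto_zero]
  have hbound : Tendsto (fun t : ℝ => c * |t|) (𝓝 0) (𝓝 0) :=
    (by fun_prop : Continuous fun t : ℝ => c * |t|).tendsto' 0 0 (by simp)
  refine squeeze_zero' (Eventually.of_forall fun t => norm_nonneg _) ?_ hbound
  filter_upwards [eventually_abs_sub_lt 0 SD.tstar_pos] with t ht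
  exact hc l t (by simpa using ht.le)

theorem tendsto_lam_div_sq_sub (l : Fin S.n) :
    Tendsto (fun t => (SD.lam l t / t ^ 2 - (SD.γ l + SD.μ l * t)) / t) (𝓝[≠] 0) (𝓝 0) := by
  obtain ⟨c, hc⟩ := SD.lam_expansion
  have hbound : Tendsto (fun t : ℝ => |SD.ν l| * |t| + c * t ^ 2) (𝓝[≠] 0) (𝓝 0) := by
    apply tendsto_nhdsWithin_of_tendsto_nhds
    exact (by fun_prop : Continuous fun t : ℝ => |SD.ν l| * |t| + c * t ^ 2).tendsto' 0 0
      (by simp)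
  refine squeeze_zero_norm' ?_ hbound
  filter_upwards [self_mem_nhdsWithin,
    nhdsWithin_le_nhds (eventually_abs_sub_lt 0 SD.tstar_pos)] with t (ht0 : t ≠ 0) ht
  have hrem := hc l t (by simpa using ht.le)
  have hsplit : (SD.lam l t / t ^ 2 - (SD.γ l + SD.μ l * t)) / t
      = SD.ν l * t + (SD.lam l t - (SD.γ l * t ^ 2 + SD.μ l * t ^ 3 + SD.ν l * t ^ 4)) / t ^ 3 := by
    field_simp
    ring
  rw [hsplit, Real.norm_eq_abs]
  refine (abs_add_le _ _).trans (add_le_add (abs_mul _ _).le ?_)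
  rw [abs_div, abs_pow, div_le_iff₀ (by positivity)]
  calc _ ≤ c * |t| ^ 5 := hrem
    _ = c * t ^ 2 * |t| ^ 3 := by rw [show |t| ^ 5 = |t| ^ 2 * |t| ^ 3 by ring, sq_abs]; ring

theorem one_le_norm_evolution_sub_comp (j : Fin S.n) {t τ θ : ℝ} (ht : |t| ≤ SD.tstar)
    (hphase : |SD.lam j t * τ - θ * SD.γ j - π| ≤ 1 / 4) (hφ : ‖SD.φ j t - SD.ω j‖ ≤ 1 / 4) :
    1 ≤ ‖(S.E t τ - NormedSpace.exp ((-I * θ) • S.germ)) ∘L S.P‖ := by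
  obtain ⟨hd, heig⟩ := SD.φ_eig j t ht
  have hgerm : ((-I * θ) • S.germ) (SD.ω j) = (-I * (θ * SD.γ j : ℝ)) • SD.ω j := by
    rw [smul_apply, SD.germ_eig, smul_smul]
    push_cast
    ring_nf
  have hlower := norm_sub_sub_two_mul_le_opNorm_sub_comp (S.E_isometry t τ)
    (by simp [Complex.norm_exp]) (S.E_apply_of_eq_smul hd heig τ)
    (NormedSpace.exp_apply_of_eq_smul hgerm)
    (S.P_fix _ (SD.ω_mem j)) (SD.ω_orthonormal.1 j)
  have hscalar := two_sub_le_norm_cexp_sub_cexp (hphase.trans (by norm_num))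
  linarith

theorem eventually_one_le_norm_resonant {j : Fin S.n} (hμ : SD.μ j ≠ 0) :
    ∀ᶠ τ in atTop, 1 ≤ ‖(S.E (π / (τ * SD.μ j)) (τ / (π / (τ * SD.μ j)) ^ 2)
      - NormedSpace.exp ((-I * τ) • S.germ)) ∘L S.P‖ := by
  have ht := tendsto_div_mul_const_atTop_nhdsNE pi_ne_zero hμ
  have ht0 := ht.mono_right nhdsWithin_le_nhds
  have hphase := ((SD.tendsto_lam_div_sq_sub j).comp ht).const_mul (π / SD.μ j)
  rw [mul_zero] at hphase
  filter_upwards [eventually_gt_atTop 0, ht0.eventually (eventually_abs_sub_lt 0 SD.tstar_pos),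
    hphase.eventually (eventually_abs_sub_lt 0 (by norm_num : (0 : ℝ) < 1 / 4)),
    ((SD.tendsto_φ j).comp ht0).eventually
      (eventually_norm_sub_lt (SD.ω j) (by norm_num : (0 : ℝ) < 1 / 4))]
    with τ hτ htstar hphase_small hφ
  set t := π / (τ * SD.μ j) with ht_def
  -- `τ μ_j t = π`: over the time `τ / t²` the `t³`-term of `λ_j(t)` accumulates the phase `π`
  have hphase_eq : SD.lam j t * (τ / t ^ 2) - τ * SD.γ j - π
      = π / SD.μ j * ((SD.lam j t / t ^ 2 - (SD.γ j + SD.μ j * t)) / t) := by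
    rw [ht_def]
    field_simp
    ring
  refine SD.one_le_norm_evolution_sub_comp j (by simpa using htstar.le) ?_ hφ.le
  rw [hphase_eq]
  simpa using hphase_small.le

end SpecData

theorem exp_approx_time_sharp_general_general (S : BSScheme) (SD : SpecData S)
    (hμ : ∃ j, SD.μ j ≠ 0) (s : ℝ) :
    ¬ ∃ C : ℝ → ℝ, (∀ τ, 0 < C τ) ∧
        Filter.Tendsto (fun τ : ℝ => C τ / |τ|) Filter.atTop (nhds 0) ∧
        ∃ t₁ > (0 : ℝ), ∃ ε₁ > (0 : ℝ), ∀ τ t ε : ℝ,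
          |t| ≤ t₁ → 0 < ε → ε ≤ ε₁ →
          ‖(S.E t (τ / ε ^ 2)
              - NormedSpace.exp
                  (((-Complex.I) * ((τ / ε ^ 2 * t ^ 2 : ℝ) : ℂ)) • S.germ))
              ∘L S.P‖ * (ε ^ s / (t ^ 2 + ε ^ 2) ^ (s / 2)) ≤ C τ * ε := by
  rintro ⟨C, -, hClim, t₁, ht₁, ε₁, hε₁, hbound⟩
  obtain ⟨j, hμ⟩ := hμ
  set Q : ℝ := (2 ^ (s / 2))⁻¹
  have hQ : 0 < Q := inv_pos.2 (Real.rpow_pos_of_pos two_pos _)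
  have hK : 0 < π / |SD.μ j| := div_pos pi_pos (abs_pos.2 hμ)
  have ht := tendsto_div_mul_const_atTop_nhdsNE pi_ne_zero hμ
  obtain ⟨τ, hτ, hone, htne, hsmall, hC⟩ :=
    ((eventually_gt_atTop 0).and <| (SD.eventually_one_le_norm_resonant hμ).and <|
      (ht.eventually self_mem_nhdsWithin).and <|
      ((ht.mono_right nhdsWithin_le_nhds).eventually
        (eventually_abs_sub_lt 0 (lt_min ht₁ hε₁))).and
        (hClim.eventually (eventually_lt_nhds (div_pos hQ (mul_pos two_pos hK))))).exists
  set t := π / (τ * SD.μ j)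
  have htne : t ≠ 0 := htne
  rw [sub_zero, lt_min_iff] at hsmall
  have hb := hbound τ t |t| hsmall.1.le (abs_pos.2 htne) hsmall.2.le
  rw [abs_rpow_div_sq_add_sq_rpow_half htne, sq_abs, div_mul_cancel₀ τ (pow_ne_zero 2 htne)] at hb
  have hCt : C τ * |t| = C τ / |τ| * (π / |SD.μ j|) := by
    rw [abs_div, abs_mul, abs_of_pos pi_pos, abs_of_pos hτ]
    ring
  have hCt_lt : C τ * |t| < Q / 2 := by
    rw [hCt]
    calc _ < Q / (2 * (π / |SD.μ j|)) * (π / |SD.μ j|) := by gcongr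
      _ = Q / 2 := by field_simp
  linarith [mul_le_mul_of_nonneg_right hone hQ.le]

/-- Suppose that in the eigenvalue expansions
`λ_l(t) = γ_l t² + μ_l t³ + …` one has `μ_j ≠ 0` for some `j` (i.e. `N₀ ≠ 0`).
Let `s ≥ 3`. Then there is no positive function `C(τ)` with
`lim_{τ→∞} C(τ)/|τ| = 0` such that
`‖e^{-iτε⁻²A(t)}P − e^{-iτε⁻²t²SP}P‖ εˢ(t²+ε²)^{-s/2} ≤ C(τ) ε` for all
`τ ∈ ℝ` and all sufficiently small `|t|` and `ε > 0`. -/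
theorem exp_approx_time_sharp_general (S : BSScheme) (SD : SpecData S)
    (hμ : ∃ j, SD.μ j ≠ 0) (s : ℝ) (hs : 3 ≤ s) :
    ¬ ∃ C : ℝ → ℝ, (∀ τ, 0 < C τ) ∧
        Filter.Tendsto (fun τ : ℝ => C τ / |τ|) Filter.atTop (nhds 0) ∧
        ∃ t₁ > (0 : ℝ), ∃ ε₁ > (0 : ℝ), ∀ τ t ε : ℝ,
          |t| ≤ t₁ → 0 < ε → ε ≤ ε₁ →
          ‖(S.E t (τ / ε ^ 2)
              - NormedSpace.exp
                  (((-Complex.I) * ((τ / ε ^ 2 * t ^ 2 : ℝ) : ℂ)) • S.germ))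
              ∘L S.P‖ * (ε ^ s / (t ^ 2 + ε ^ 2) ^ (s / 2)) ≤ C τ * ε :=
  exp_approx_time_sharp_general_general S SD hμ s
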